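/- Under Algorithm 2 with parameter δ ≥ 1, at most 5δ greater neighbors of any vertex i initiate a connection to i, and at most 5δ lesser neighbors of i initiate a connection to i; hence the degree of every vertex in the final topology is at most max{δ, 5} + 10δ. -/

import Mathlib

noncomputable section

/-- The Gilbert graph on vertex set `Fin n`: `i ≠ j` are adjacent iff `dist (x i) (x j) ≤ R`. -/
def gilbert (n : ℕ) (x : Fin n → EuclideanSpace ℝ (Fin 2)) (R : ℝ) : SimpleGraph (Fin n) where
  Adj i j := i ≠ j ∧ dist (x i) (x j) ≤ R
  symm := by
    refine ⟨?_⟩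
    intro i j h
    exact ⟨h.1.symm, by rw [dist_comm]; exact h.2⟩
  loopless := by refine ⟨?_⟩; intro i h; exact h.1 rfl

/-- The lesser neighborhood `N_i = {j < i : dist (x i) (x j) ≤ R}`. -/
def lesserN (n : ℕ) (x : Fin n → EuclideanSpace ℝ (Fin 2)) (R : ℝ) (i : Fin n) : Set (Fin n) :=
  {j | j < i ∧ dist (x i) (x j) ≤ R}

/-- Vertex `i` initiates a connection to `j` iff `j` is the maximum-index vertex of its
connected component in the Gilbert graph induced on the lesser neighborhood `N_i`. -/
def initiates (n : ℕ) (x : Fin n → EuclideanSpace ℝ (Fin 2)) (R : ℝ) (i j : Fin n) : Prop :=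
  ∃ hj : j ∈ lesserN n x R i,
    ∀ k, ∀ hk : k ∈ lesserN n x R i,
      ((gilbert n x R).induce (lesserN n x R i)).Reachable ⟨j, hj⟩ ⟨k, hk⟩ → k ≤ j

/-- The topology produced by Algorithm 1: the symmetrization of the initiated connections. -/
def Agraph (n : ℕ) (x : Fin n → EuclideanSpace ℝ (Fin 2)) (R : ℝ) : SimpleGraph (Fin n) where
  Adj i j := initiates n x R i j ∨ initiates n x R j i
  symm := ⟨fun i j h => Or.symm h⟩
  loopless := by
    refine ⟨?_⟩
    intro i h
    rcases h with ⟨hj, _⟩ | ⟨hj, _⟩ <;> exact absurd hj.1 (lt_irrefl i)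

attribute [local instance] Classical.propDecidable

/-- The lesser neighbors of `i`, as a finset. -/
def lesserF (n : ℕ) (x : Fin n → EuclideanSpace ℝ (Fin 2)) (R : ℝ) (i : Fin n) :
    Finset (Fin n) :=
  Finset.univ.filter (fun j => j < i ∧ dist (x i) (x j) ≤ R)

/-- The greater neighbors of `i`, as a finset. -/
def greaterF (n : ℕ) (x : Fin n → EuclideanSpace ℝ (Fin 2)) (R : ℝ) (i : Fin n) :
    Finset (Fin n) :=
  Finset.univ.filter (fun j => i < j ∧ dist (x i) (x j) ≤ R)

/-- The connections initiated in Line 1 of Algorithm 2 (those of Algorithm 1):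
the maximum-index vertex of each component of the Gilbert graph induced on `N_i`. -/
def MsetF (n : ℕ) (x : Fin n → EuclideanSpace ℝ (Fin 2)) (R : ℝ) (i : Fin n) :
    Finset (Fin n) :=
  Finset.univ.filter (fun j => initiates n x R i j)

/-- Greedy phase adding `max (pool \ C)` while `|C| < δ` and `pool \ C ≠ ∅`
(Lines 2–3 of Algorithm 2), with explicit fuel. -/
def phaseMax {n : ℕ} (δ : ℕ) (pool : Finset (Fin n)) :
    ℕ → Finset (Fin n) → Finset (Fin n)
  | 0, C => C
  | fuel + 1, C =>
    if h : C.card < δ ∧ (pool \ C).Nonempty then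
      phaseMax δ pool fuel (insert ((pool \ C).max' h.2) C)
    else C

/-- Greedy phase adding `min (pool \ C)` while `|C| < δ` and `pool \ C ≠ ∅`
(Lines 4–5 of Algorithm 2), with explicit fuel. -/
def phaseMin {n : ℕ} (δ : ℕ) (pool : Finset (Fin n)) :
    ℕ → Finset (Fin n) → Finset (Fin n)
  | 0, C => C
  | fuel + 1, C =>
    if h : C.card < δ ∧ (pool \ C).Nonempty then
      phaseMin δ pool fuel (insert ((pool \ C).min' h.2) C)
    else C

/-- The set `C_i` of connections initiated by vertex `i` under Algorithm 2. -/
def Cset (n : ℕ) (x : Fin n → EuclideanSpace ℝ (Fin 2)) (R : ℝ) (δ : ℕ) (i : Fin n) :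
    Finset (Fin n) :=
  phaseMin δ (greaterF n x R i) n
    (phaseMax δ (lesserF n x R i) n (MsetF n x R i))

/-- The final topology of Algorithm 2: edge `(i,j)` present iff `j ∈ C_i` or `i ∈ C_j`. -/
def topo2 (n : ℕ) (x : Fin n → EuclideanSpace ℝ (Fin 2)) (R : ℝ) (δ : ℕ) :
    SimpleGraph (Fin n) where
  Adj i j := i ≠ j ∧ (j ∈ Cset n x R δ i ∨ i ∈ Cset n x R δ j)
  symm := ⟨fun i j h => ⟨h.1.symm, Or.symm h.2⟩⟩
  loopless := ⟨fun i h => h.1 rfl⟩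

/-!
If `k > i` initiates a connection to `i`, then fewer than `δ` lesser neighbours of `k` that lie
above `i` are adjacent to `i`: if `i` was chosen in Line 1 there are none, since they would lie in
the component of `i` in `N_k`, whose maximum is `i`; if `i` was chosen in Line 3, they already
belonged to `C_k`, which then had fewer than `δ` elements. So in the Gilbert graph on the greater
initiators of `i` every vertex has fewer than `δ` lower neighbours, and greedy colouring splits
them into `δ` independent sets. An independent set of points in the disk of radius `R` around `x i`
has at most five elements, because two of any six points of such a disk subtend an angle of at most
`π / 3` at its centre. The lesser initiators are handled symmetrically through Line 5, and
`|C_i| ≤ max δ 5` because Line 1 picks an independent set.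
-/

open Finset Real

namespace SimpleGraph

variable {α : Type*} [LinearOrder α] (G : SimpleGraph α) [DecidableRel G.Adj]

theorem exists_coloring_of_card_lowerNeighbors_lt {δ : ℕ} (S : Finset α)
    (hdeg : ∀ a ∈ S, #{b ∈ S | b < a ∧ G.Adj a b} < δ) :
    ∃ c : α → ℕ, (∀ a ∈ S, c a < δ) ∧ ∀ a ∈ S, ∀ b ∈ S, b < a → G.Adj a b → c a ≠ c b := by
  induction S using Finset.induction_on_max with
  | empty => exact ⟨fun _ => 0, by simp, by simp⟩
  | insert a s hlt ih =>
    have hsub : ∀ k, {b ∈ s | b < k ∧ G.Adj k b} ⊆ {b ∈ insert a s | b < k ∧ G.Adj k b} :=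
      fun k => filter_subset_filter _ (subset_insert a s)
    obtain ⟨c, hcδ, hc⟩ := ih fun k hk =>
      (card_le_card (hsub k)).trans_lt (hdeg k (mem_insert_of_mem hk))
    have hlower : {b ∈ insert a s | b < a ∧ G.Adj a b} = {b ∈ s | G.Adj a b} := by
      ext b
      simp only [mem_filter, mem_insert]
      constructor
      · rintro ⟨rfl | hb, hba, hab⟩
        · exact absurd hba (lt_irrefl b)
        · exact ⟨hb, hab⟩
      · rintro ⟨hb, hab⟩
        exact ⟨Or.inr hb, hlt b hb, hab⟩
    obtain ⟨col, hcol, hfree⟩ : ∃ col ∈ range δ, col ∉ image c {b ∈ s | G.Adj a b} := by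
      refine exists_mem_notMem_of_card_lt_card ?_
      rw [card_range]
      calc #(image c {b ∈ s | G.Adj a b}) ≤ #{b ∈ s | G.Adj a b} := card_image_le
        _ < δ := hlower ▸ hdeg a (mem_insert_self a s)
    refine ⟨Function.update c a col, ?_, ?_⟩
    · intro k hk
      rcases eq_or_ne k a with rfl | hka
      · simpa using hcol
      · rw [Function.update_of_ne hka]
        exact hcδ k ((mem_insert.1 hk).resolve_left hka)
    · intro k hk b hb hbk hkb
      have hka : k ≤ a := by
        rcases mem_insert.1 hk with rfl | hk
        exacts [le_rfl, (hlt k hk).le]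
      have hba : b ≠ a := (hbk.trans_le hka).ne
      have hbs : b ∈ s := (mem_insert.1 hb).resolve_left hba
      rw [Function.update_of_ne hba]
      rcases eq_or_ne k a with rfl | hka
      · rw [Function.update_self]
        rintro rfl
        exact hfree (mem_image_of_mem c (mem_filter.2 ⟨hbs, hkb⟩))
      · rw [Function.update_of_ne hka]
        exact hc k ((mem_insert.1 hk).resolve_left hka) b hbs hbk hkb

theorem card_le_mul_of_card_lowerNeighbors_lt {m δ : ℕ} (S : Finset α)
    (hindep : ∀ T ⊆ S, G.IsIndepSet ↑T → #T ≤ m)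
    (hdeg : ∀ a ∈ S, #{b ∈ S | b < a ∧ G.Adj a b} < δ) :
    #S ≤ m * δ := by
  obtain ⟨c, hcδ, hc⟩ := G.exists_coloring_of_card_lowerNeighbors_lt S hdeg
  have hclass : ∀ j, G.IsIndepSet ↑{a ∈ S | c a = j} := by
    intro j a ha b hb hab hadj
    rw [coe_filter] at ha hb
    rcases hab.lt_or_gt with hlt | hlt
    · exact hc b hb.1 a ha.1 hlt hadj.symm (hb.2.trans ha.2.symm)
    · exact hc a ha.1 b hb.1 hlt hadj (ha.2.trans hb.2.symm)
  calc #S = ∑ j ∈ range δ, #{a ∈ S | c a = j} :=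
        card_eq_sum_card_fiberwise fun a ha => mem_range.2 (hcδ a ha)
    _ ≤ #(range δ) • m := sum_le_card_nsmul _ _ _ fun j _ => hindep _ (filter_subset _ _) (hclass j)
    _ = m * δ := by rw [card_range, smul_eq_mul, mul_comm]

theorem card_le_mul_of_card_upperNeighbors_lt {m δ : ℕ} (S : Finset α)
    (hindep : ∀ T ⊆ S, G.IsIndepSet ↑T → #T ≤ m)
    (hdeg : ∀ a ∈ S, #{b ∈ S | a < b ∧ G.Adj a b} < δ) :
    #S ≤ m * δ := by
  let : LinearOrder α := inferInstanceAs (LinearOrder αᵒᵈ)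
  exact card_le_mul_of_card_lowerNeighbors_lt G S hindep fun a ha => by
    convert hdeg a ha using 3
    exact Iff.rfl

end SimpleGraph

theorem Real.half_le_cos_of_abs_le {t : ℝ} (h : |t| ≤ π / 3) : 1 / 2 ≤ cos t := by
  rw [← cos_abs, ← cos_pi_div_three]
  exact cos_le_cos_of_nonneg_of_le_pi (abs_nonneg t) (by linarith [pi_pos]) h

theorem Real.exists_half_le_cos_sub_of_mem_Ico (φ : Fin 6 → ℝ) (h0 : φ 0 = 0)
    (hφ : ∀ j, φ j ∈ Set.Ico 0 (2 * π)) : ∃ a b, a ≠ b ∧ 1 / 2 ≤ cos (φ a - φ b) := by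
  have hπ3 : 0 < π / 3 := by linarith [pi_pos]
  set f : Fin 6 → ℕ := fun j => ⌊φ j / (π / 3)⌋₊
  have hsector : ∀ j, (f j : ℝ) * (π / 3) ≤ φ j ∧ φ j < (f j + 1) * (π / 3) := by
    intro j
    have hnn : 0 ≤ φ j / (π / 3) := div_nonneg (hφ j).1 hπ3.le
    constructor
    · exact (le_div_iff₀ hπ3).1 (Nat.floor_le hnn)
    · exact (div_lt_iff₀ hπ3).1 (Nat.lt_floor_add_one _)
  by_cases h5 : ∃ b, f b = 5
  · -- the last sector is within `π / 3` of the anchor `φ 0 = 0` modulo `2π`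
    obtain ⟨b, hb⟩ := h5
    have hb0 : b ≠ 0 := by
      rintro rfl
      simp [f, h0] at hb
    refine ⟨b, 0, hb0, ?_⟩
    rw [h0, sub_zero, ← cos_sub_two_pi]
    apply half_le_cos_of_abs_le
    have := hsector b
    rw [hb] at this
    rw [abs_le]
    constructor <;> linarith [(hφ b).2]
  · push Not at h5
    have hmaps : Set.MapsTo f ↑(univ : Finset (Fin 6)) ↑(range 5) := by
      intro j _
      have := hsector j
      have hlt : (f j : ℝ) < 6 := by nlinarith [(hφ j).2, (hφ j).1]
      have : f j < 6 := by exact_mod_cast hlt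
      simp only [coe_range, Set.mem_Iio]
      have := h5 j
      omega
    obtain ⟨a, -, b, -, hab, hfab⟩ :=
      exists_ne_map_eq_of_card_lt_of_maps_to (by simp) hmaps
    refine ⟨a, b, hab, half_le_cos_of_abs_le ?_⟩
    have ha := hsector a
    have hb := hsector b
    rw [hfab] at ha
    rw [abs_le]
    constructor <;> linarith

theorem Real.exists_half_le_cos_sub (θ : Fin 6 → ℝ) :
    ∃ a b, a ≠ b ∧ 1 / 2 ≤ cos (θ a - θ b) := by
  set φ : Fin 6 → ℝ := fun j => toIcoMod two_pi_pos 0 (θ j - θ 0)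
  have h0 : φ 0 = 0 := by
    simp only [φ, sub_self]
    exact (toIcoMod_eq_self _).2 ⟨le_rfl, by linarith [pi_pos]⟩
  have hφ : ∀ j, φ j ∈ Set.Ico 0 (2 * π) := fun j => by
    simpa using toIcoMod_mem_Ico two_pi_pos 0 (θ j - θ 0)
  obtain ⟨a, b, hab, h⟩ := exists_half_le_cos_sub_of_mem_Ico φ h0 hφ
  refine ⟨a, b, hab, ?_⟩
  have hcos : cos (φ a - φ b) = cos (θ a - θ b) := by
    simp only [φ, ← Real.Angle.cos_coe, Real.Angle.coe_sub, Real.Angle.coe_toIcoMod]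
    congr 1
    abel
  rwa [← hcos]

theorem Complex.re_mul_conj_eq (z w : ℂ) :
    (z * (starRingEnd ℂ) w).re = ‖z‖ * ‖w‖ * Real.cos (arg z - arg w) := by
  rw [Real.cos_sub]
  simp only [mul_re, conj_re, conj_im, ← norm_mul_cos_arg z, ← norm_mul_sin_arg z,
    ← norm_mul_cos_arg w, ← norm_mul_sin_arg w]
  ring

theorem Complex.dist_le_of_half_le_cos_arg_sub {z w : ℂ} {R : ℝ} (hz : ‖z‖ ≤ R) (hw : ‖w‖ ≤ R)
    (h : 1 / 2 ≤ Real.cos (arg z - arg w)) : dist z w ≤ R := by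
  have hsq : dist z w ^ 2 = ‖z‖ ^ 2 + ‖w‖ ^ 2 - 2 * (‖z‖ * ‖w‖ * Real.cos (arg z - arg w)) := by
    rw [dist_eq, ← normSq_eq_norm_sq, normSq_sub, normSq_eq_norm_sq, normSq_eq_norm_sq,
      re_mul_conj_eq]
  have hR : 0 ≤ R := (norm_nonneg z).trans hz
  refine (pow_le_pow_iff_left₀ dist_nonneg hR two_ne_zero).1 ?_
  rw [hsq]
  nlinarith [norm_nonneg z, norm_nonneg w, mul_nonneg (norm_nonneg z) (norm_nonneg w),
    mul_nonneg (sub_nonneg.2 hz) (sub_nonneg.2 hw)]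

theorem Complex.exists_dist_le_of_fin_six {R : ℝ} (c : ℂ) (p : Fin 6 → ℂ)
    (hp : ∀ j, dist (p j) c ≤ R) : ∃ a b, a ≠ b ∧ dist (p a) (p b) ≤ R := by
  obtain ⟨a, b, hab, h⟩ := Real.exists_half_le_cos_sub fun j => arg (p j - c)
  refine ⟨a, b, hab, ?_⟩
  rw [← dist_sub_right _ _ c]
  exact dist_le_of_half_le_cos_arg_sub (dist_eq_norm (p a) c ▸ hp a)
    (dist_eq_norm (p b) c ▸ hp b) h

theorem EuclideanSpace.card_le_five_of_pairwise_lt_dist {ι : Type*} {R : ℝ}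
    (x : ι → EuclideanSpace ℝ (Fin 2)) (c : EuclideanSpace ℝ (Fin 2)) (T : Finset ι)
    (hc : ∀ k ∈ T, dist (x k) c ≤ R) (hT : (T : Set ι).Pairwise fun a b => R < dist (x a) (x b)) :
    #T ≤ 5 := by
  by_contra! h
  let e : Fin 6 → T := T.equivFin.symm ∘ Fin.castLE h
  have he : Function.Injective e := T.equivFin.symm.injective.comp (Fin.castLE_injective h)
  let J := Complex.orthonormalBasisOneI.repr.symm
  obtain ⟨a, b, hab, hdist⟩ := Complex.exists_dist_le_of_fin_six (J c) (fun j => J (x (e j)))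
    fun j => by simpa only [LinearIsometryEquiv.dist_map] using hc _ (e j).2
  rw [LinearIsometryEquiv.dist_map] at hdist
  exact (hT (e a).2 (e b).2 (fun h => hab (he (Subtype.ext h)))).not_ge hdist

section Algorithm2

variable {n δ : ℕ}

theorem mem_phaseMax {pool C : Finset (Fin n)} {fuel : ℕ} {v : Fin n}
    (hv : v ∈ phaseMax δ pool fuel C) :
    v ∈ C ∨ ∃ C' : Finset (Fin n), #C' < δ ∧ IsGreatest ↑(pool \ C') v := by
  induction fuel generalizing C with
  | zero => exact Or.inl hv
  | succ fuel ih =>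
    rw [phaseMax] at hv
    split_ifs at hv with h
    · rcases ih hv with hmem | hC'
      · rcases mem_insert.1 hmem with rfl | hC
        · exact Or.inr ⟨C, h.1, by simpa using (pool \ C).isGreatest_max' h.2⟩
        · exact Or.inl hC
      · exact Or.inr hC'
    · exact Or.inl hv

theorem mem_phaseMin {pool C : Finset (Fin n)} {fuel : ℕ} {v : Fin n}
    (hv : v ∈ phaseMin δ pool fuel C) :
    v ∈ C ∨ ∃ C' : Finset (Fin n), #C' < δ ∧ IsLeast ↑(pool \ C') v := by
  induction fuel generalizing C with
  | zero => exact Or.inl hv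
  | succ fuel ih =>
    rw [phaseMin] at hv
    split_ifs at hv with h
    · rcases ih hv with hmem | hC'
      · rcases mem_insert.1 hmem with rfl | hC
        · exact Or.inr ⟨C, h.1, by simpa using (pool \ C).isLeast_min' h.2⟩
        · exact Or.inl hC
      · exact Or.inr hC'
    · exact Or.inl hv

theorem card_phaseMax_le (pool C : Finset (Fin n)) (fuel : ℕ) :
    #(phaseMax δ pool fuel C) ≤ max #C δ := by
  induction fuel generalizing C with
  | zero => exact le_max_left _ _
  | succ fuel ih =>
    rw [phaseMax]
    split_ifs with h
    · have := card_insert_le ((pool \ C).max' h.2) C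
      exact (ih _).trans (max_le (by omega) (le_max_right _ _))
    · exact le_max_left _ _

theorem card_phaseMin_le (pool C : Finset (Fin n)) (fuel : ℕ) :
    #(phaseMin δ pool fuel C) ≤ max #C δ := by
  induction fuel generalizing C with
  | zero => exact le_max_left _ _
  | succ fuel ih =>
    rw [phaseMin]
    split_ifs with h
    · have := card_insert_le ((pool \ C).min' h.2) C
      exact (ih _).trans (max_le (by omega) (le_max_right _ _))
    · exact le_max_left _ _

end Algorithm2

section Cset

variable {n δ : ℕ} {x : Fin n → EuclideanSpace ℝ (Fin 2)} {R : ℝ}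

theorem mem_Cset {k v : Fin n} (h : v ∈ Cset n x R δ k) :
    initiates n x R k v ∨
      (∃ C' : Finset (Fin n), #C' < δ ∧ IsGreatest ↑(lesserF n x R k \ C') v) ∨
      ∃ C' : Finset (Fin n), #C' < δ ∧ IsLeast ↑(greaterF n x R k \ C') v := by
  rcases mem_phaseMin h with h | h
  · rcases mem_phaseMax h with h | h
    · exact Or.inl (mem_filter.1 h).2
    · exact Or.inr (Or.inl h)
  · exact Or.inr (Or.inr h)

theorem dist_le_of_mem_Cset {k v : Fin n} (h : v ∈ Cset n x R δ k) : dist (x k) (x v) ≤ R := by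
  rcases mem_Cset h with ⟨⟨-, hv⟩, -⟩ | ⟨C', -, hv, -⟩ | ⟨C', -, hv, -⟩
  · exact hv
  · exact ((mem_filter.1 (mem_sdiff.1 hv).1).2).2
  · exact ((mem_filter.1 (mem_sdiff.1 hv).1).2).2

theorem isIndepSet_MsetF (i : Fin n) : (gilbert n x R).IsIndepSet ↑(MsetF n x R i) := by
  intro a ha b hb hab hadj
  obtain ⟨haN, hamax⟩ := (mem_filter.1 ha).2
  obtain ⟨hbN, hbmax⟩ := (mem_filter.1 hb).2
  have hreach : ((gilbert n x R).induce (lesserN n x R i)).Reachable ⟨a, haN⟩ ⟨b, hbN⟩ :=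
    (show ((gilbert n x R).induce _).Adj ⟨a, haN⟩ ⟨b, hbN⟩ from hadj).reachable
  exact hab (le_antisymm (hbmax a haN hreach.symm) (hamax b hbN hreach))

theorem card_le_five_of_isIndepSet_gilbert {T : Finset (Fin n)} (c : EuclideanSpace ℝ (Fin 2))
    (hT : (gilbert n x R).IsIndepSet ↑T) (hc : ∀ k ∈ T, dist (x k) c ≤ R) : #T ≤ 5 :=
  EuclideanSpace.card_le_five_of_pairwise_lt_dist x c T hc
    fun _ ha _ hb hab => lt_of_not_ge fun hle => hT ha hb hab ⟨hab, hle⟩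

theorem card_Cset_le (i : Fin n) : #(Cset n x R δ i) ≤ max δ 5 := by
  have hM : #(MsetF n x R i) ≤ 5 :=
    card_le_five_of_isIndepSet_gilbert (x i) (isIndepSet_MsetF i)
      fun k hk => by rw [dist_comm]; exact (mem_filter.1 hk).2.1.2
  have h1 := card_phaseMax_le (δ := δ) (lesserF n x R i) (MsetF n x R i) n
  have h2 := card_phaseMin_le (δ := δ) (greaterF n x R i)
    (phaseMax δ (lesserF n x R i) n (MsetF n x R i)) n
  rw [Cset]
  omega

end Cset

section Initiators

variable {n δ : ℕ} {x : Fin n → EuclideanSpace ℝ (Fin 2)} {R : ℝ}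

theorem card_filter_lesserF_lt_of_mem_Cset (hδ : 0 < δ) {i k : Fin n} (hik : i < k)
    (h : i ∈ Cset n x R δ k) : #{t ∈ lesserF n x R k | i < t ∧ dist (x i) (x t) ≤ R} < δ := by
  rcases mem_Cset h with ⟨hiN, hmax⟩ | ⟨C', hC', hgreatest⟩ | ⟨C', -, hleast⟩
  · -- `i` is the largest vertex of its component in `N_k`, and every such `t` lies in it
    suffices hempty : {t ∈ lesserF n x R k | i < t ∧ dist (x i) (x t) ≤ R} = ∅ by
      rw [hempty, card_empty]
      exact hδ
    refine filter_eq_empty_iff.2 fun t ht ⟨hit, hdist⟩ => ?_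
    have htN : t ∈ lesserN n x R k := (mem_filter.1 ht).2
    have hadj : ((gilbert n x R).induce (lesserN n x R k)).Adj ⟨i, hiN⟩ ⟨t, htN⟩ :=
      ⟨hit.ne, hdist⟩
    exact (hmax t htN hadj.reachable).not_gt hit
  · refine (card_le_card fun t ht => ?_).trans_lt hC'
    obtain ⟨htF, hit, -⟩ := mem_filter.1 ht
    by_contra htC'
    exact (hgreatest.2 (mem_sdiff.2 ⟨htF, htC'⟩)).not_gt hit
  · exact absurd (mem_filter.1 (mem_sdiff.1 hleast.1).1).2.1 hik.not_gt

theorem card_filter_greaterF_lt_of_mem_Cset {i k : Fin n} (hki : k < i)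
    (h : i ∈ Cset n x R δ k) : #{t ∈ greaterF n x R k | t < i} < δ := by
  rcases mem_Cset h with ⟨⟨hik, -⟩, -⟩ | ⟨C', -, hgreatest⟩ | ⟨C', hC', hleast⟩
  · exact absurd hik hki.not_gt
  · exact absurd (mem_filter.1 (mem_sdiff.1 hgreatest.1).1).2.1 hki.not_gt
  · refine (card_le_card fun t ht => ?_).trans_lt hC'
    obtain ⟨htF, hti⟩ := mem_filter.1 ht
    by_contra htC'
    exact (hleast.2 (mem_sdiff.2 ⟨htF, htC'⟩)).not_gt hti

def greaterInitiators (n : ℕ) (x : Fin n → EuclideanSpace ℝ (Fin 2)) (R : ℝ) (δ : ℕ)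
    (i : Fin n) : Finset (Fin n) :=
  {k | i < k ∧ i ∈ Cset n x R δ k}

def lesserInitiators (n : ℕ) (x : Fin n → EuclideanSpace ℝ (Fin 2)) (R : ℝ) (δ : ℕ)
    (i : Fin n) : Finset (Fin n) :=
  {k | k < i ∧ i ∈ Cset n x R δ k}

theorem card_le_five_of_isIndepSet_of_mem_Cset {i : Fin n} {T : Finset (Fin n)}
    (hT : ∀ k ∈ T, i ∈ Cset n x R δ k) (hind : (gilbert n x R).IsIndepSet ↑T) : #T ≤ 5 :=
  card_le_five_of_isIndepSet_gilbert (x i) hind fun k hk => dist_le_of_mem_Cset (hT k hk)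

theorem card_greaterInitiators_le (hδ : 0 < δ) (i : Fin n) :
    #(greaterInitiators n x R δ i) ≤ 5 * δ := by
  refine (gilbert n x R).card_le_mul_of_card_lowerNeighbors_lt _
    (fun T hT => card_le_five_of_isIndepSet_of_mem_Cset fun k hk => (mem_filter.1 (hT hk)).2.2)
    fun k hk => ?_
  obtain ⟨hik, hCk⟩ := (mem_filter.1 hk).2
  refine (card_le_card fun t ht => ?_).trans_lt (card_filter_lesserF_lt_of_mem_Cset hδ hik hCk)
  simp only [mem_filter] at ht
  obtain ⟨htS, htk, hadj⟩ := ht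
  obtain ⟨hit, hCt⟩ := (mem_filter.1 htS).2
  have hit_dist : dist (x i) (x t) ≤ R := dist_comm (x t) (x i) ▸ dist_le_of_mem_Cset hCt
  exact mem_filter.2 ⟨mem_filter.2 ⟨mem_univ t, htk, hadj.2⟩, hit, hit_dist⟩

theorem card_lesserInitiators_le (i : Fin n) : #(lesserInitiators n x R δ i) ≤ 5 * δ := by
  refine (gilbert n x R).card_le_mul_of_card_upperNeighbors_lt _
    (fun T hT => card_le_five_of_isIndepSet_of_mem_Cset fun k hk => (mem_filter.1 (hT hk)).2.2)
    fun k hk => ?_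
  obtain ⟨hki, hCk⟩ := (mem_filter.1 hk).2
  refine (card_le_card fun t ht => ?_).trans_lt (card_filter_greaterF_lt_of_mem_Cset hki hCk)
  simp only [mem_filter] at ht
  obtain ⟨htS, hkt, hadj⟩ := ht
  exact mem_filter.2 ⟨mem_filter.2 ⟨mem_univ t, hkt, hadj.2⟩, (mem_filter.1 htS).2.1⟩

theorem neighborSet_topo2_subset (i : Fin n) :
    (topo2 n x R δ).neighborSet i ⊆
      ↑(Cset n x R δ i ∪ greaterInitiators n x R δ i ∪ lesserInitiators n x R δ i) := by
  rintro k ⟨hik, hkC | hiC⟩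
  · simp [hkC]
  · rcases hik.lt_or_gt with hlt | hlt
    · simp [greaterInitiators, hlt, hiC]
    · simp [lesserInitiators, hlt, hiC]

end Initiators

theorem topo2_degree_upper_bound_general
    (n : ℕ) (x : Fin n → EuclideanSpace ℝ (Fin 2)) (R : ℝ)
    (δ : ℕ) (hδ : 1 ≤ δ) (i : Fin n) :
    Nat.card {k : Fin n // i < k ∧ i ∈ Cset n x R δ k} ≤ 5 * δ ∧
    Nat.card {k : Fin n // k < i ∧ i ∈ Cset n x R δ k} ≤ 5 * δ ∧
    Nat.card ((topo2 n x R δ).neighborSet i) ≤ max δ 5 + 10 * δ := by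
  have hgreater := card_greaterInitiators_le (x := x) (R := R) hδ i
  have hlesser := card_lesserInitiators_le (x := x) (R := R) (δ := δ) i
  refine ⟨?_, ?_, ?_⟩
  · simpa [greaterInitiators, Nat.card_eq_fintype_card, Fintype.card_subtype] using hgreater
  · simpa [lesserInitiators, Nat.card_eq_fintype_card, Fintype.card_subtype] using hlesser
  · calc Nat.card ((topo2 n x R δ).neighborSet i)
        ≤ #(Cset n x R δ i ∪ greaterInitiators n x R δ i ∪ lesserInitiators n x R δ i) := by
          simpa using Nat.card_mono (Set.toFinite _) (neighborSet_topo2_subset i)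
      _ ≤ #(Cset n x R δ i) + #(greaterInitiators n x R δ i) + #(lesserInitiators n x R δ i) :=
          (card_union_le _ _).trans (Nat.add_le_add_right (card_union_le _ _) _)
      _ ≤ max δ 5 + 10 * δ := by
          have := card_Cset_le (x := x) (R := R) (δ := δ) i
          omega

/-- Under Algorithm 2, at most `5δ` greater neighbors and at most `5δ` lesser neighbors
of any vertex `i` initiate a connection to `i`; hence every vertex has degree at most
`max δ 5 + 10δ` in the final topology. -/
theorem topo2_degree_upper_bound
    (n : ℕ) (x : Fin n → EuclideanSpace ℝ (Fin 2)) (R : ℝ) (hR : 0 < R)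
    (δ : ℕ) (hδ : 1 ≤ δ) (i : Fin n) :
    Nat.card {k : Fin n // i < k ∧ i ∈ Cset n x R δ k} ≤ 5 * δ ∧
    Nat.card {k : Fin n // k < i ∧ i ∈ Cset n x R δ k} ≤ 5 * δ ∧
    Nat.card ((topo2 n x R δ).neighborSet i) ≤ max δ 5 + 10 * δ :=
  topo2_degree_upper_bound_general n x R δ hδ i
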